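/- arXiv:2507.08370 — 2 statements merged into one kernel-verified Lean document; each statement's English description precedes it below -/
import Mathlib

section
/- For d ≥ 2 and every f in the Schwartz space on R^d, (d−1) ∫ |f(x)|^2/|x| dx ≤ 2 ‖f‖_{L^2} ‖∇f‖_{L^2}. -/
/-!
In polar coordinates `x = r • ω` the measure `dx / |x|` becomes `r ^ (d - 2) dr dσ(ω)`. On each
ray, integration by parts turns `(d - 1) ∫ r ^ (d - 2) |f (r ω)|² dr` into
`-∫ r ^ (d - 1) ∂ᵣ |f (r ω)|² dr`, with no boundary terms since `d ≥ 2` and `f` decays, and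
`|∂ᵣ |f|²| ≤ 2 |f| |∇f|`. Integrating over the sphere gives `(d - 1) ∫ |f|² / |x| ≤ 2 ∫ |f| |∇f|`,
and Cauchy–Schwarz finishes the proof.
-/

open MeasureTheory Set Filter Topology Metric Module
open scoped ENNReal

section Polar

variable {E : Type*} [NormedAddCommGroup E] [NormedSpace ℝ E] [FiniteDimensional ℝ E]
  [MeasurableSpace E] [BorelSpace E]

theorem lintegral_eq_lintegral_toSphere_Ioi [Nontrivial E] (μ : Measure E) [μ.IsAddHaarMeasure]
    {g : E → ℝ≥0∞} (hg : Measurable g) :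
    ∫⁻ x, g x ∂μ = ∫⁻ ω : sphere (0 : E) 1, ∫⁻ r in Ioi (0 : ℝ),
      ENNReal.ofReal (r ^ (finrank ℝ E - 1)) * g (r • (ω : E)) ∂volume ∂μ.toSphere := by
  have hsm : Measurable fun z : sphere (0 : E) 1 × Ioi (0 : ℝ) => g (z.2.1 • (z.1 : E)) :=
    hg.comp (continuous_subtype_val.snd'.smul continuous_subtype_val.fst').measurable
  calc ∫⁻ x, g x ∂μ = ∫⁻ x in ({0}ᶜ : Set E), g x ∂μ := by
        rw [← lintegral_add_compl g (measurableSet_singleton (0 : E)),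
          setLIntegral_measure_zero _ _ (measure_singleton 0), zero_add]
    _ = ∫⁻ x : ({0}ᶜ : Set E), g x ∂(μ.comap Subtype.val) := by
        rw [lintegral_subtype_comap (measurableSet_singleton (0 : E)).compl]
    _ = ∫⁻ z : sphere (0 : E) 1 × Ioi (0 : ℝ), g (z.2.1 • (z.1 : E))
          ∂(μ.toSphere.prod (Measure.volumeIoiPow (finrank ℝ E - 1))) := by
        rw [← μ.measurePreserving_homeomorphUnitSphereProd.lintegral_comp_emb
          (Homeomorph.measurableEmbedding _)]
        refine lintegral_congr fun x => ?_
        simp only [homeomorphUnitSphereProd_apply_snd_coe,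
          homeomorphUnitSphereProd_apply_fst_coe, smul_smul,
          mul_inv_cancel₀ (norm_ne_zero_iff.2 x.2), one_smul]
    _ = ∫⁻ ω : sphere (0 : E) 1, ∫⁻ r : Ioi (0 : ℝ), g (r.1 • (ω : E))
          ∂(Measure.volumeIoiPow (finrank ℝ E - 1)) ∂μ.toSphere :=
        lintegral_prod _ hsm.aemeasurable
    _ = _ := by
        refine lintegral_congr fun ω => ?_
        rw [Measure.volumeIoiPow, lintegral_withDensity_eq_lintegral_mul _ (by fun_prop)
          (by fun_prop), ← lintegral_subtype_comap measurableSet_Ioi]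
        rfl

end Polar

theorem integral_norm_mul_norm_le_sqrt_mul_sqrt {α E G : Type*} [MeasurableSpace α]
    {μ : Measure α} [NormedAddCommGroup E] [NormedAddCommGroup G] {f : α → E} {g : α → G}
    (hf : MemLp f 2 μ) (hg : MemLp g 2 μ) :
    ∫ a, ‖f a‖ * ‖g a‖ ∂μ ≤ √(∫ a, ‖f a‖ ^ 2 ∂μ) * √(∫ a, ‖g a‖ ^ 2 ∂μ) := by
  have := integral_mul_norm_le_Lp_mul_Lq (f := fun a => ‖f a‖) (g := fun a => ‖g a‖)
    Real.HolderConjugate.two_two (by simpa using hf.norm) (by simpa using hg.norm)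
  simpa [Real.sqrt_eq_rpow, Real.rpow_two] using this

namespace SchwartzMap

section Line

variable {F G : Type*} [NormedAddCommGroup F] [NormedSpace ℝ F]
  [NormedAddCommGroup G] [NormedSpace ℝ G]

theorem integrable_pow_mul_norm_mul_norm (h : 𝓢(ℝ, F)) (g : 𝓢(ℝ, G)) (k : ℕ) :
    Integrable fun r : ℝ => r ^ k * (‖h r‖ * ‖g r‖) := by
  refine ((h.integrable_pow_mul volume k).mul_const (SchwartzMap.seminorm ℝ 0 0 g)).mono'
    (by fun_prop) (Eventually.of_forall fun r => ?_)
  rw [norm_mul, norm_mul, norm_pow, norm_norm, norm_norm, ← mul_assoc]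
  gcongr
  exact g.norm_le_seminorm ℝ r

theorem tendsto_pow_mul_norm_sq_atTop (h : 𝓢(ℝ, F)) (k : ℕ) :
    Tendsto (fun r : ℝ => r ^ k * ‖h r‖ ^ 2) atTop (𝓝 0) := by
  have hbdd : IsBoundedUnder (· ≤ ·) atTop fun r : ℝ => ‖r ^ k * ‖h r‖‖ :=
    isBoundedUnder_of ⟨SchwartzMap.seminorm ℝ k 0 h, fun r => by
      simpa [norm_mul, norm_pow] using h.norm_pow_mul_le_seminorm ℝ k r⟩
  have hdecay : Tendsto (fun r : ℝ => ‖h r‖) atTop (𝓝 0) := by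
    simpa using (h.tendsto_cocompact.mono_left atTop_le_cocompact).norm
  simpa only [sq, mul_assoc] using isBoundedUnder_le_mul_tendsto_zero hbdd hdecay

end Line

section Inner

variable {F : Type*} [NormedAddCommGroup F] [InnerProductSpace ℝ F]

theorem mul_integral_Ioi_pow_mul_norm_sq_le (h : 𝓢(ℝ, F)) (k : ℕ) :
    (k + 1 : ℝ) * ∫ r in Ioi 0, r ^ k * ‖h r‖ ^ 2 ≤
      2 * ∫ r in Ioi 0, r ^ (k + 1) * (‖h r‖ * ‖deriv h r‖) := by
  have hu (r : ℝ) : HasDerivAt (· ^ (k + 1)) ((k + 1 : ℝ) * r ^ k) r := by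
    simpa using hasDerivAt_pow (k + 1) r
  have hv (r : ℝ) : HasDerivAt (‖h ·‖ ^ 2) (2 * inner ℝ (h r) (deriv h r)) r :=
    (h.hasDerivAt r).norm_sq
  have hbound (r : ℝ) : |2 * inner ℝ (h r) (deriv h r)| ≤ 2 * (‖h r‖ * ‖deriv h r‖) := by
    rw [abs_mul, abs_two]
    gcongr
    exact abs_real_inner_le_norm _ _
  have hint : Integrable fun r : ℝ => r ^ (k + 1) * (‖h r‖ * ‖deriv h r‖) :=
    h.integrable_pow_mul_norm_mul_norm (derivCLM ℝ F h) (k + 1)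
  have huv' : Integrable fun r : ℝ => r ^ (k + 1) * (2 * inner ℝ (h r) (deriv h r)) := by
    have : Continuous (deriv h) := (derivCLM ℝ F h).continuous
    refine (hint.norm.const_mul 2).mono' (by fun_prop) (Eventually.of_forall fun r => ?_)
    calc ‖r ^ (k + 1) * (2 * inner ℝ (h r) (deriv h r))‖
        ≤ ‖r ^ (k + 1)‖ * (2 * (‖h r‖ * ‖deriv h r‖)) := by
          rw [norm_mul]
          gcongr
          exact hbound r
      _ = 2 * ‖r ^ (k + 1) * (‖h r‖ * ‖deriv h r‖)‖ := by
          rw [norm_mul, Real.norm_of_nonneg (by positivity : 0 ≤ ‖h r‖ * ‖deriv h r‖)]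
          ring
  have hu'v : Integrable fun r : ℝ => (k + 1 : ℝ) * r ^ k * ‖h r‖ ^ 2 := by
    simpa only [sq, mul_assoc] using (h.integrable_pow_mul_norm_mul_norm h k).const_mul (k + 1 : ℝ)
  have hzero : Tendsto (fun r : ℝ => r ^ (k + 1) * ‖h r‖ ^ 2) (𝓝[>] 0) (𝓝 0) := by
    have hcont : Continuous fun r : ℝ => r ^ (k + 1) * ‖h r‖ ^ 2 := by fun_prop
    simpa using hcont.tendsto' 0 _ (by simp) |>.mono_left nhdsWithin_le_nhds
  have ibp := integral_Ioi_mul_deriv_eq_deriv_mul (fun r _ => hu r) (fun r _ => hv r)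
    huv'.integrableOn hu'v.integrableOn hzero (h.tendsto_pow_mul_norm_sq_atTop (k + 1))
  calc (k + 1 : ℝ) * ∫ r in Ioi 0, r ^ k * ‖h r‖ ^ 2
      = -∫ r in Ioi 0, r ^ (k + 1) * (2 * inner ℝ (h r) (deriv h r)) := by
        rw [ibp, ← integral_const_mul]
        simp only [mul_assoc, sub_self, zero_sub, neg_neg]
    _ ≤ ∫ r in Ioi 0, 2 * (r ^ (k + 1) * (‖h r‖ * ‖deriv h r‖)) := by
        rw [← integral_neg]
        refine setIntegral_mono_on huv'.integrableOn.neg (hint.const_mul 2).integrableOn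
          measurableSet_Ioi fun r hr => ?_
        rw [← mul_neg, mul_left_comm]
        gcongr
        · exact pow_nonneg (le_of_lt hr) _
        · exact (neg_le_abs _).trans (hbound r)
    _ = 2 * ∫ r in Ioi 0, r ^ (k + 1) * (‖h r‖ * ‖deriv h r‖) := integral_const_mul _ _

end Inner

section Ray

variable {E F : Type*} [NormedAddCommGroup E] [NormedSpace ℝ E]
  [NormedAddCommGroup F] [NormedSpace ℝ F]

noncomputable def restrictLine (f : 𝓢(E, F)) {ω : E} (hω : ‖ω‖ = 1) : 𝓢(ℝ, F) :=
  compCLMOfAntilipschitz ℝ (g := fun r : ℝ => r • ω) (by fun_prop)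
    (LinearIsometry.toSpanSingleton ℝ E hω).antilipschitz f

@[simp]
theorem restrictLine_apply (f : 𝓢(E, F)) {ω : E} (hω : ‖ω‖ = 1) (r : ℝ) :
    f.restrictLine hω r = f (r • ω) :=
  rfl

theorem norm_deriv_restrictLine_le (f : 𝓢(E, F)) {ω : E} (hω : ‖ω‖ = 1) (r : ℝ) :
    ‖deriv (f.restrictLine hω) r‖ ≤ ‖fderiv ℝ f (r • ω)‖ := by
  have hline : HasDerivAt (f.restrictLine hω) (fderiv ℝ f (r • ω) ω) r := by
    convert (f.hasFDerivAt (r • ω)).comp_hasDerivAt r ((hasDerivAt_id r).smul_const ω) using 1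
    · rfl
    · rw [one_smul]
  simpa [hline.deriv, hω] using (fderiv ℝ f (r • ω)).le_opNorm ω

end Ray

section Hardy

variable {E F : Type*} [NormedAddCommGroup E] [NormedSpace ℝ E] [FiniteDimensional ℝ E]
  [MeasurableSpace E] [BorelSpace E] [NormedAddCommGroup F] [InnerProductSpace ℝ F]
  (μ : Measure E) [μ.IsAddHaarMeasure]

theorem mul_lintegral_norm_sq_div_norm_le (f : 𝓢(E, F)) {k : ℕ} (hk : finrank ℝ E = k + 2) :
    ENNReal.ofReal (k + 1) * ∫⁻ x, ENNReal.ofReal (‖f x‖ ^ 2 / ‖x‖) ∂μ ≤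
      ENNReal.ofReal 2 * ∫⁻ x, ENNReal.ofReal (‖f x‖ * ‖fderiv ℝ f x‖) ∂μ := by
  have : Nontrivial E := Module.nontrivial_of_finrank_pos (R := ℝ) (by omega)
  have : Continuous (fderiv ℝ f) := (fderivCLM ℝ E F f).continuous
  rw [lintegral_eq_lintegral_toSphere_Ioi μ (by fun_prop),
    lintegral_eq_lintegral_toSphere_Ioi μ (by fun_prop), show finrank ℝ E - 1 = k + 1 by omega,
    ← lintegral_const_mul' _ _ ENNReal.ofReal_ne_top,
    ← lintegral_const_mul' _ _ ENNReal.ofReal_ne_top]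
  refine lintegral_mono fun ω => ?_
  have hω : ‖(ω : E)‖ = 1 := norm_eq_of_mem_sphere ω
  set h := f.restrictLine hω
  have hpos : ∀ᵐ r ∂(volume.restrict (Ioi (0 : ℝ))), 0 < r := ae_restrict_mem measurableSet_Ioi
  calc ENNReal.ofReal (k + 1) * ∫⁻ r in Ioi 0,
        ENNReal.ofReal (r ^ (k + 1)) * ENNReal.ofReal (‖f (r • (ω : E))‖ ^ 2 / ‖r • (ω : E)‖)
      = ENNReal.ofReal ((k + 1) * ∫ r in Ioi 0, r ^ k * ‖h r‖ ^ 2) := by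
        have hint : Integrable fun r : ℝ => r ^ k * ‖h r‖ ^ 2 := by
          simpa only [sq] using h.integrable_pow_mul_norm_mul_norm h k
        rw [ENNReal.ofReal_mul (by positivity),
          ofReal_integral_eq_lintegral_ofReal hint.integrableOn
            (hpos.mono fun r hr => by simp only [Pi.zero_apply]; positivity)]
        congr 1
        refine setLIntegral_congr_fun measurableSet_Ioi fun r (hr : 0 < r) => ?_
        rw [← ENNReal.ofReal_mul (by positivity), norm_smul, hω, mul_one, Real.norm_of_nonneg hr.le]
        congr 1
        simp only [h, restrictLine_apply]
        field_simp
        ring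
    _ ≤ ENNReal.ofReal (2 * ∫ r in Ioi 0, r ^ (k + 1) * (‖h r‖ * ‖deriv h r‖)) :=
        ENNReal.ofReal_le_ofReal (h.mul_integral_Ioi_pow_mul_norm_sq_le k)
    _ = ENNReal.ofReal 2 * ∫⁻ r in Ioi 0, ENNReal.ofReal (r ^ (k + 1) * (‖h r‖ * ‖deriv h r‖)) := by
        have hint : Integrable fun r : ℝ => r ^ (k + 1) * (‖h r‖ * ‖deriv h r‖) :=
          h.integrable_pow_mul_norm_mul_norm (derivCLM ℝ F h) (k + 1)
        rw [ENNReal.ofReal_mul zero_le_two, ofReal_integral_eq_lintegral_ofReal hint.integrableOn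
          (hpos.mono fun r hr => by simp only [Pi.zero_apply]; positivity)]
    _ ≤ _ := by
        gcongr with r
        rw [ENNReal.ofReal_mul' (by positivity)]
        gcongr _ * ENNReal.ofReal ?_
        exact mul_le_mul_of_nonneg_left (norm_deriv_restrictLine_le f hω r) (norm_nonneg _)

theorem mul_integral_norm_sq_div_norm_le (f : 𝓢(E, F)) (hE : 2 ≤ finrank ℝ E) :
    ((finrank ℝ E : ℝ) - 1) * ∫ x, ‖f x‖ ^ 2 / ‖x‖ ∂μ ≤
      2 * ∫ x, ‖f x‖ * ‖fderiv ℝ f x‖ ∂μ := by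
  obtain ⟨k, hk⟩ : ∃ k, finrank ℝ E = k + 2 := ⟨_, (Nat.sub_add_cancel hE).symm⟩
  have : Continuous (fderiv ℝ f) := (fderivCLM ℝ E F f).continuous
  have hint : Integrable (fun x => ‖f x‖ * ‖fderiv ℝ f x‖) μ :=
    (f.memLp 2 μ).norm.integrable_mul ((fderivCLM ℝ E F f).memLp 2 μ).norm
  have key := ENNReal.toReal_mono (ENNReal.mul_ne_top ENNReal.ofReal_ne_top
    hint.lintegral_lt_top.ne) (f.mul_lintegral_norm_sq_div_norm_le μ hk)
  have hdim : ((finrank ℝ E : ℝ) - 1) = k + 1 := by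
    rw [hk]
    push_cast
    ring
  rw [hdim, integral_eq_lintegral_of_nonneg_ae (Eventually.of_forall fun x => by positivity)
      (by fun_prop : Measurable fun x => ‖f x‖ ^ 2 / ‖x‖).aestronglyMeasurable,
    integral_eq_lintegral_of_nonneg_ae (Eventually.of_forall fun x => by positivity)
      (by fun_prop)]
  rwa [ENNReal.toReal_mul, ENNReal.toReal_mul, ENNReal.toReal_ofReal (by positivity),
    ENNReal.toReal_ofReal zero_le_two] at key

end Hardy

end SchwartzMap

open SchwartzMap in
/-- Commutator inequality: for `d ≥ 2` and Schwartz `f` on `ℝ^d`,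
`(d−1) ∫ |f(x)|²/|x| dx ≤ 2 ‖f‖_{L²} ‖∇f‖_{L²}`. -/
theorem hardy_type_inequality_order_one (d : ℕ) (hd : 2 ≤ d)
    (f : SchwartzMap (EuclideanSpace ℝ (Fin d)) ℂ) :
    ((d : ℝ) - 1) * (∫ x : EuclideanSpace ℝ (Fin d), ‖f x‖ ^ 2 / ‖x‖) ≤
      2 * Real.sqrt (∫ x : EuclideanSpace ℝ (Fin d), ‖f x‖ ^ 2) *
        Real.sqrt (∫ x : EuclideanSpace ℝ (Fin d), ‖fderiv ℝ f x‖ ^ 2) := by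
  have hdim := finrank_euclideanSpace_fin (𝕜 := ℝ) (n := d)
  calc ((d : ℝ) - 1) * ∫ x, ‖f x‖ ^ 2 / ‖x‖
      ≤ 2 * ∫ x, ‖f x‖ * ‖fderiv ℝ f x‖ := by
        simpa [hdim] using f.mul_integral_norm_sq_div_norm_le volume (hdim.symm ▸ hd)
    _ ≤ 2 * (√(∫ x, ‖f x‖ ^ 2) * √(∫ x, ‖fderiv ℝ f x‖ ^ 2)) := by
        gcongr
        exact integral_norm_mul_norm_le_sqrt_mul_sqrt (f.memLp 2)
          ((fderivCLM ℝ _ ℂ f).memLp 2 volume)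
    _ = _ := (mul_assoc _ _ _).symm
end

section
/- Under the hypotheses of the log-convexity lemma, if instead 2⟨(SA − AS)v(t), v(t)⟩ ≥ ψ(t)⟨v(t), v(t)⟩ for a continuous function ψ, then H(t) e^{-B(t)} ≤ H(0)^{1−t} H(1)^t, where B solves B'' = ψ on [0,1] with B(0) = B(1) = 0. -/
/-!
With `H(t) = ‖v(t)‖²`, the function `F = log H - B` has `F'' = (Ḧ H - Ḣ²) / H² - ψ`. Inserting the
formulas for `Ḣ` and `Ḧ`, Cauchy–Schwarz `Re⟨Sv, v⟩² ≤ ‖Sv‖² ‖v‖²` and the commutator bound give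
`Ḧ H - Ḣ² ≥ ψ H²`, so `F` is convex. As `B` vanishes at `0` and `1`, the chord inequality for `F`
on `[0, 1]`, exponentiated, is the claim.
-/

open Real Set RCLike
open scoped InnerProductSpace

theorem convexOn_log_sub_of_hasDerivAt {g g' g'' B B' ψ : ℝ → ℝ}
    (hg : ∀ t, HasDerivAt g (g' t) t) (hg' : ∀ t, HasDerivAt g' (g'' t) t)
    (hB : ∀ t, HasDerivAt B (B' t) t) (hB' : ∀ t, HasDerivAt B' (ψ t) t)
    (hpos : ∀ t, 0 < g t) (hψ : ∀ t, ψ t * g t ^ 2 ≤ g'' t * g t - g' t ^ 2) :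
    ConvexOn ℝ univ (fun t => log (g t) - B t) := by
  have hF : ∀ t, HasDerivAt (fun t => log (g t) - B t) (g' t / g t - B' t) t := fun t =>
    ((hg t).log (hpos t).ne').sub (hB t)
  have hF' : ∀ t, HasDerivAt (fun t => g' t / g t - B' t)
      ((g'' t * g t - g' t * g' t) / g t ^ 2 - ψ t) t := fun t =>
    ((hg' t).div (hg t) (hpos t).ne').sub (hB' t)
  refine convexOn_of_hasDerivWithinAt2_nonneg convex_univ
    (fun t _ => (hF t).continuousAt.continuousWithinAt)
    (fun t _ => (hF t).hasDerivWithinAt) (fun t _ => (hF' t).hasDerivWithinAt) fun t _ => ?_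
  rw [sub_nonneg, le_div_iff₀ (pow_pos (hpos t) 2)]
  linarith [hψ t]

theorem mul_exp_neg_le_rpow_mul_rpow_of_convexOn {g B : ℝ → ℝ}
    (hconv : ConvexOn ℝ (Icc 0 1) (fun t => log (g t) - B t))
    (hpos : ∀ t ∈ Icc (0 : ℝ) 1, 0 < g t) (hB0 : B 0 = 0) (hB1 : B 1 = 0)
    {t : ℝ} (ht : t ∈ Icc (0 : ℝ) 1) :
    g t * exp (-B t) ≤ g 0 ^ (1 - t) * g 1 ^ t := by
  have h0 : (0 : ℝ) ∈ Icc (0 : ℝ) 1 := by norm_num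
  have h1 : (1 : ℝ) ∈ Icc (0 : ℝ) 1 := by norm_num
  have hchord := hconv.2 h0 h1 (sub_nonneg.2 ht.2) ht.1 (sub_add_cancel 1 t)
  simp only [smul_eq_mul, mul_zero, mul_one, zero_add, hB0, hB1, sub_zero] at hchord
  calc g t * exp (-B t) = exp (log (g t) - B t) := by
        rw [exp_sub, exp_log (hpos t ht), div_eq_mul_inv, exp_neg]
    _ ≤ exp ((1 - t) * log (g 0) + t * log (g 1)) := exp_le_exp.2 hchord
    _ = g 0 ^ (1 - t) * g 1 ^ t := by
        rw [rpow_def_of_pos (hpos 0 h0), rpow_def_of_pos (hpos 1 h1), exp_add, mul_comm (log _),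
          mul_comm (log _)]

section Evolution

variable {𝕜 E : Type*} [RCLike 𝕜] [NormedAddCommGroup E] [InnerProductSpace 𝕜 E]

theorem HasDerivAt.re_inner [NormedSpace ℝ E] {f g : ℝ → E} {f' g' : E} {t : ℝ}
    (hf : HasDerivAt f f' t) (hg : HasDerivAt g g' t) :
    HasDerivAt (fun s => re ⟪f s, g s⟫_𝕜) (re ⟪f t, g'⟫_𝕜 + re ⟪f', g t⟫_𝕜) t := by
  have h := (reCLM (K := 𝕜)).hasFDerivAt.comp_hasDerivAt t (hf.inner 𝕜 hg)
  simp only [reCLM_apply, map_add] at h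
  exact h

theorem re_inner_apply_self_eq_zero {A : E →ₗ[𝕜] E} (hA : ∀ x y, ⟪A x, y⟫_𝕜 = -⟪x, A y⟫_𝕜)
    (x : E) : re ⟪A x, x⟫_𝕜 = 0 := by
  have h := congrArg re (hA x x)
  rw [map_neg, inner_re_symm x] at h
  linarith

theorem re_inner_commutator_apply_self {S A : E →ₗ[𝕜] E} (hS : S.IsSymmetric)
    (hA : ∀ x y, ⟪A x, y⟫_𝕜 = -⟪x, A y⟫_𝕜) (x : E) :
    re ⟪S (A x) - A (S x), x⟫_𝕜 = 2 * re ⟪S x, A x⟫_𝕜 := by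
  rw [inner_sub_left, map_sub, hS, hA (S x), map_neg, inner_re_symm (A x)]
  ring

theorem sq_re_inner_le_norm_sq_mul_norm_sq (x y : E) :
    re ⟪x, y⟫_𝕜 ^ 2 ≤ ‖x‖ ^ 2 * ‖y‖ ^ 2 := by
  rw [← sq_abs, ← mul_pow]
  exact pow_le_pow_left₀ (abs_nonneg _) ((abs_re_le_norm _).trans (norm_inner_le_norm x y)) 2

variable {S A : E →ₗ[𝕜] E} {v : ℝ → E} {t : ℝ}

theorem hasDerivAt_norm_sq_of_hasDerivAt_add [NormedSpace ℝ E]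
    (hA : ∀ x y, ⟪A x, y⟫_𝕜 = -⟪x, A y⟫_𝕜) (hv : HasDerivAt v (S (v t) + A (v t)) t) :
    HasDerivAt (fun s => ‖v s‖ ^ 2) (2 * re ⟪S (v t), v t⟫_𝕜) t := by
  have h := hv.re_inner (𝕜 := 𝕜) hv
  simp only [inner_self_eq_norm_sq] at h
  convert h using 1
  rw [inner_add_right, inner_add_left, map_add, map_add, inner_re_symm (v t),
    inner_re_symm (v t) (A (v t)), re_inner_apply_self_eq_zero hA]
  ring

theorem hasDerivAt_two_mul_re_inner_of_hasDerivAt_add [NormedSpace ℝ E] [IsScalarTower ℝ 𝕜 E]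
    [CompleteSpace E] (hS : S.IsSymmetric)
    (hA : ∀ x y, ⟪A x, y⟫_𝕜 = -⟪x, A y⟫_𝕜) (hv : HasDerivAt v (S (v t) + A (v t)) t) :
    HasDerivAt (fun s => 2 * re ⟪S (v s), v s⟫_𝕜)
      (4 * ‖S (v t)‖ ^ 2 + 2 * re ⟪S (A (v t)) - A (S (v t)), v t⟫_𝕜) t := by
  let Sc : E →L[𝕜] E := ⟨S, hS.continuous⟩
  have hSv : HasDerivAt (fun s => S (v s)) (S (S (v t) + A (v t))) t :=
    (Sc.restrictScalars ℝ).hasFDerivAt.comp_hasDerivAt t hv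
  refine ((hSv.re_inner (𝕜 := 𝕜) hv).const_mul 2).congr_deriv ?_
  rw [re_inner_commutator_apply_self hS hA, hS _ (v t), inner_re_symm _ (S (v t)),
    inner_add_right, map_add, inner_self_eq_norm_sq]
  ring

end Evolution

theorem weighted_log_convexity_general
    {H : Type*} [NormedAddCommGroup H] [InnerProductSpace ℂ H] [CompleteSpace H]
    (S A : H →ₗ[ℂ] H)
    (hS : ∀ x y : H, inner ℂ (S x) y = (inner ℂ x (S y) : ℂ))
    (hA : ∀ x y : H, inner ℂ (A x) y = -(inner ℂ x (A y) : ℂ))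
    (v : ℝ → H) (hv : ∀ t : ℝ, HasDerivAt v (S (v t) + A (v t)) t)
    (hne : ∀ t : ℝ, v t ≠ 0)
    (ψ : ℝ → ℝ)
    (hcomm : ∀ t : ℝ, ψ t * ‖v t‖ ^ 2 ≤ 2 * (inner ℂ (S (A (v t)) - A (S (v t))) (v t) : ℂ).re)
    (B B' : ℝ → ℝ) (hB : ∀ t : ℝ, HasDerivAt B (B' t) t)
    (hB' : ∀ t : ℝ, HasDerivAt B' (ψ t) t)
    (hB0 : B 0 = 0) (hB1 : B 1 = 0) :
    ∀ t ∈ Set.Icc (0 : ℝ) 1,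
      ‖v t‖ ^ 2 * Real.exp (-B t) ≤
        Real.rpow (‖v 0‖ ^ 2) (1 - t) * Real.rpow (‖v 1‖ ^ 2) t := by
  have hpos : ∀ t, 0 < ‖v t‖ ^ 2 := fun t => pow_pos (norm_pos_iff.2 (hne t)) 2
  have hgap : ∀ t, ψ t * (‖v t‖ ^ 2) ^ 2 ≤
      (4 * ‖S (v t)‖ ^ 2 + 2 * re ⟪S (A (v t)) - A (S (v t)), v t⟫_ℂ) * ‖v t‖ ^ 2 -
        (2 * re ⟪S (v t), v t⟫_ℂ) ^ 2 := fun t => by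
    have hcs := sq_re_inner_le_norm_sq_mul_norm_sq (𝕜 := ℂ) (S (v t)) (v t)
    simp only [re_to_complex] at hcs ⊢
    linarith [mul_le_mul_of_nonneg_right (hcomm t) (hpos t).le]
  have hconv := convexOn_log_sub_of_hasDerivAt
    (fun t => hasDerivAt_norm_sq_of_hasDerivAt_add hA (hv t))
    (fun t => hasDerivAt_two_mul_re_inner_of_hasDerivAt_add hS hA (hv t)) hB hB' hpos hgap
  exact fun t ht => mul_exp_neg_le_rpow_mul_rpow_of_convexOn (hconv.subset (subset_univ _)
    (convex_Icc 0 1)) (fun t _ => hpos t) hB0 hB1 ht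

/-- Weighted logarithmic convexity: if `∂_t v = (S + A)v` with `S` symmetric, `A`
skew-symmetric, and `2⟨(SA − AS)v(t), v(t)⟩ ≥ ψ(t)‖v(t)‖²`, then
`H(t) e^{-B(t)} ≤ H(0)^{1−t} H(1)^t` where `B'' = ψ`, `B(0) = B(1) = 0`. -/
theorem weighted_log_convexity
    {H : Type*} [NormedAddCommGroup H] [InnerProductSpace ℂ H] [CompleteSpace H]
    (S A : H →ₗ[ℂ] H)
    (hS : ∀ x y : H, inner ℂ (S x) y = (inner ℂ x (S y) : ℂ))
    (hA : ∀ x y : H, inner ℂ (A x) y = -(inner ℂ x (A y) : ℂ))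
    (v : ℝ → H) (hv : ∀ t : ℝ, HasDerivAt v (S (v t) + A (v t)) t)
    (hne : ∀ t : ℝ, v t ≠ 0)
    (ψ : ℝ → ℝ) (hψ : Continuous ψ)
    (hcomm : ∀ t : ℝ, ψ t * ‖v t‖ ^ 2 ≤ 2 * (inner ℂ (S (A (v t)) - A (S (v t))) (v t) : ℂ).re)
    (B B' : ℝ → ℝ) (hB : ∀ t : ℝ, HasDerivAt B (B' t) t)
    (hB' : ∀ t : ℝ, HasDerivAt B' (ψ t) t)
    (hB0 : B 0 = 0) (hB1 : B 1 = 0) :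
    ∀ t ∈ Set.Icc (0 : ℝ) 1,
      ‖v t‖ ^ 2 * Real.exp (-B t) ≤
        Real.rpow (‖v 0‖ ^ 2) (1 - t) * Real.rpow (‖v 1‖ ^ 2) t :=
  weighted_log_convexity_general S A hS hA v hv hne ψ hcomm B B' hB hB' hB0 hB1
end
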